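/- Let $g_0$ be a nonvanishing $C^2$ solution of $-g_0'' + q g_0 = 0$, and let $u_1 = g_0 \sum_{\text{even } n} \frac{\omega^n}{n!} \widetilde{X}^{(n)}$ solve $-u_1'' + (q + \omega^2) u_1 = 0$. Then the Darboux transform $v_1 = u_1' - \frac{g_0'}{g_0} u_1$ equals $\frac{\omega}{g_0} \sum_{\text{odd } n \geq 1} \frac{\omega^n}{n!} \widetilde{X}^{(n)}$ and satisfies the transformed Schrödinger equation $-v_1'' + (r + \omega^2) v_1 = 0$ where $r = 2 (g_0'/g_0)^2 - q$. -/

import Mathlib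

/-!
Writing `Eₙ = ωⁿ/n! · X̃⁽ⁿ⁾`, the recursion gives `Eₙ₊₁' = ω wₙ₊₁ Eₙ`, with weight `g₀²` at odd and
`g₀⁻²` at even indices. The induction bound `‖X̃⁽ⁿ⁾(x)‖ ≤ (M²|x|)ⁿ` makes the derived series
uniformly summable, so the even and odd series `S`, `T` can be differentiated term by term:
`S' = ω g₀⁻² T` and `T' = ω g₀² S`. Hence `u₁ = g₀ S` has Darboux transform `g₀ S' = ω T / g₀`, and
differentiating `ω T / g₀` twice, using only these two relations and `g₀'' = q g₀`, gives the
transformed equation.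
-/

open scoped Nat
open Set Topology MeasureTheory

/-- The SPPS recursive integrals: `spps wodd weven 0 ≡ 1` and
`spps wodd weven n x = n ∫₀ˣ spps wodd weven (n-1) · w`, where the weight `w`
is `wodd` when `n` is odd and `weven` when `n` is even. -/
noncomputable def spps (wodd weven : ℝ → ℂ) : ℕ → ℝ → ℂ
  | 0 => fun _ => 1
  | n + 1 => fun x => (n + 1 : ℂ) *
      ∫ t in (0:ℝ)..x,
        spps wodd weven n t * (if (n + 1) % 2 = 1 then wodd t else weven t)

noncomputable def sppsWeight (wodd weven : ℝ → ℂ) (n : ℕ) (t : ℝ) : ℂ :=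
  if n % 2 = 1 then wodd t else weven t

noncomputable def sppsTerm (wodd weven : ℝ → ℂ) (ω : ℂ) (n : ℕ) (x : ℝ) : ℂ :=
  ω ^ n / (n ! : ℂ) * spps wodd weven n x

section Spps

variable {wo we : ℝ → ℂ} {s : Set ℝ} {N C : ℝ} {ω : ℂ}

theorem spps_succ_apply (n : ℕ) (x : ℝ) :
    spps wo we (n + 1) x =
      (n + 1 : ℂ) * ∫ t in (0:ℝ)..x, spps wo we n t * sppsWeight wo we (n + 1) t :=
  rfl

theorem spps_succ_apply_zero (n : ℕ) : spps wo we (n + 1) 0 = 0 := by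
  simp [spps_succ_apply]

theorem sppsWeight_two_mul_add_one (k : ℕ) : sppsWeight wo we (2 * k + 1) = wo := by
  simp [sppsWeight, funext_iff]

theorem sppsWeight_two_mul_add_two (k : ℕ) : sppsWeight wo we (2 * k + 1 + 1) = we := by
  simp [sppsWeight, funext_iff, Nat.add_mod]

theorem continuousOn_sppsWeight (hwo : ContinuousOn wo s) (hwe : ContinuousOn we s) (n : ℕ) :
    ContinuousOn (sppsWeight wo we n) s := by
  unfold sppsWeight
  split_ifs
  exacts [hwo, hwe]

theorem norm_sppsWeight_le (hwo : ∀ x ∈ s, ‖wo x‖ ≤ N) (hwe : ∀ x ∈ s, ‖we x‖ ≤ N) (n : ℕ) :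
    ∀ x ∈ s, ‖sppsWeight wo we n x‖ ≤ N := by
  unfold sppsWeight
  split_ifs
  exacts [hwo, hwe]

theorem hasDerivAt_spps_succ (hs : IsOpen s) (hs' : s.OrdConnected) (h0 : (0:ℝ) ∈ s) {n : ℕ}
    (hF : ContinuousOn (fun t => spps wo we n t * sppsWeight wo we (n + 1) t) s)
    {x : ℝ} (hx : x ∈ s) :
    HasDerivAt (spps wo we (n + 1))
      ((n + 1 : ℂ) * (spps wo we n x * sppsWeight wo we (n + 1) x)) x :=
  (intervalIntegral.integral_hasDerivAt_right
    ((hF.mono (hs'.uIcc_subset h0 hx)).intervalIntegrable)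
    (hF.stronglyMeasurableAtFilter hs x hx) (hF.continuousAt (hs.mem_nhds hx))).const_mul _

theorem continuousOn_spps (hs : IsOpen s) (hs' : s.OrdConnected) (h0 : (0:ℝ) ∈ s)
    (hw : ∀ n, ContinuousOn (sppsWeight wo we n) s) : ∀ n, ContinuousOn (spps wo we n) s
  | 0 => continuousOn_const
  | n + 1 => fun _ hx =>
    (hasDerivAt_spps_succ hs hs' h0 ((continuousOn_spps hs hs' h0 hw n).mul (hw _))
      hx).continuousAt.continuousWithinAt

theorem norm_spps_le (hs' : s.OrdConnected) (h0 : (0:ℝ) ∈ s)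
    (hwN : ∀ n, ∀ x ∈ s, ‖sppsWeight wo we n x‖ ≤ N) :
    ∀ n, ∀ x ∈ s, ‖spps wo we n x‖ ≤ (N * |x|) ^ n
  | 0, _, _ => by simp [spps]
  | n + 1, x, hx => by
    have hF : ∀ t ∈ uIoc (0:ℝ) x,
        ‖spps wo we n t * sppsWeight wo we (n + 1) t‖ ≤ N ^ (n + 1) * |t - 0| ^ n := by
      intro t ht
      have ht' := hs'.uIcc_subset h0 hx (uIoc_subset_uIcc ht)
      have hX := norm_spps_le hs' h0 hwN n t ht'
      calc ‖spps wo we n t * sppsWeight wo we (n + 1) t‖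
          ≤ (N * |t|) ^ n * N :=
            (norm_mul_le _ _).trans
              (mul_le_mul hX (hwN _ t ht') (norm_nonneg _) ((norm_nonneg _).trans hX))
        _ = N ^ (n + 1) * |t - 0| ^ n := by rw [sub_zero]; ring
    have hint : ‖∫ t in (0:ℝ)..x, spps wo we n t * sppsWeight wo we (n + 1) t‖ ≤
        N ^ (n + 1) * (|x| ^ (n + 1) / (n + 1)) := by
      rw [intervalIntegral.norm_intervalIntegral_eq]
      refine (norm_integral_le_of_norm_le ((by fun_prop : Continuous
        fun t : ℝ => N ^ (n + 1) * |t - 0| ^ n).integrableOn_uIoc)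
        ((ae_restrict_iff' measurableSet_uIoc).2 (.of_forall hF))).trans_eq ?_
      rw [integral_const_mul, integral_pow_abs_sub_uIoc, sub_zero]
    rw [spps_succ_apply, norm_mul, show ‖(n + 1 : ℂ)‖ = n + 1 by norm_cast]
    calc (n + 1 : ℝ) * ‖∫ t in (0:ℝ)..x, spps wo we n t * sppsWeight wo we (n + 1) t‖
        ≤ (n + 1) * (N ^ (n + 1) * (|x| ^ (n + 1) / (n + 1))) := by gcongr
      _ = (N * |x|) ^ (n + 1) := by field_simp; ring

theorem hasDerivAt_sppsTerm_succ (hs : IsOpen s) (hs' : s.OrdConnected) (h0 : (0:ℝ) ∈ s)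
    (hw : ∀ n, ContinuousOn (sppsWeight wo we n) s) (n : ℕ) {x : ℝ} (hx : x ∈ s) :
    HasDerivAt (sppsTerm wo we ω (n + 1))
      (ω * sppsWeight wo we (n + 1) x * sppsTerm wo we ω n x) x := by
  refine ((hasDerivAt_spps_succ hs hs' h0
    ((continuousOn_spps hs hs' h0 hw n).mul (hw _)) hx).const_mul
    (ω ^ (n + 1) / ((n + 1)! : ℂ))).congr_deriv ?_
  simp only [sppsTerm, Nat.factorial_succ, Nat.cast_mul, Nat.cast_succ]
  field_simp
  ring

theorem norm_sppsTerm_le (hs' : s.OrdConnected) (h0 : (0:ℝ) ∈ s)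
    (hwN : ∀ n, ∀ x ∈ s, ‖sppsWeight wo we n x‖ ≤ N) (hC : ∀ x ∈ s, |x| ≤ C)
    (n : ℕ) {x : ℝ} (hx : x ∈ s) :
    ‖sppsTerm wo we ω n x‖ ≤ (‖ω‖ * (N * C)) ^ n / n ! := by
  have hN : 0 ≤ N := (norm_nonneg _).trans (hwN 0 x hx)
  calc ‖sppsTerm wo we ω n x‖ = ‖ω‖ ^ n / n ! * ‖spps wo we n x‖ := by
        rw [sppsTerm, norm_mul, norm_div, norm_pow, Complex.norm_natCast]
    _ ≤ ‖ω‖ ^ n / n ! * (N * C) ^ n := by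
        gcongr
        exact (norm_spps_le hs' h0 hwN n x hx).trans (by gcongr; exact hC x hx)
    _ = (‖ω‖ * (N * C)) ^ n / n ! := by ring

theorem summable_sppsTerm_comp (hs' : s.OrdConnected) (h0 : (0:ℝ) ∈ s)
    (hwN : ∀ n, ∀ x ∈ s, ‖sppsWeight wo we n x‖ ≤ N) (hC : ∀ x ∈ s, |x| ≤ C)
    {m : ℕ → ℕ} (hm : m.Injective) {x : ℝ} (hx : x ∈ s) :
    Summable fun k => sppsTerm wo we ω (m k) x :=
  .of_norm_bounded ((Real.summable_pow_div_factorial _).comp_injective hm)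
    fun k => norm_sppsTerm_le hs' h0 hwN hC (m k) hx

theorem hasDerivAt_tsum_sppsTerm_comp_succ (hs : IsOpen s) (hs' : s.OrdConnected)
    (h0 : (0:ℝ) ∈ s) (hw : ∀ n, ContinuousOn (sppsWeight wo we n) s)
    (hwN : ∀ n, ∀ x ∈ s, ‖sppsWeight wo we n x‖ ≤ N) (hC : ∀ x ∈ s, |x| ≤ C)
    {m : ℕ → ℕ} (hm : m.Injective) {x : ℝ} (hx : x ∈ s) :
    HasDerivAt (fun y => ∑' k, sppsTerm wo we ω (m k + 1) y)
      (∑' k, ω * sppsWeight wo we (m k + 1) x * sppsTerm wo we ω (m k) x) x := by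
  refine hasDerivAt_tsum_of_isPreconnected
    (((Real.summable_pow_div_factorial (‖ω‖ * (N * C))).comp_injective hm).mul_left (‖ω‖ * N))
    hs hs'.isPreconnected (fun k y hy => hasDerivAt_sppsTerm_succ hs hs' h0 hw _ hy)
    (fun k y hy => ?_) h0 ?_ hx
  · have hN : 0 ≤ N := (norm_nonneg _).trans (hwN 0 y hy)
    rw [norm_mul, norm_mul]
    gcongr
    exacts [hwN _ y hy, norm_sppsTerm_le hs' h0 hwN hC _ hy]
  · simp only [sppsTerm, spps_succ_apply_zero, mul_zero]
    exact summable_zero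

theorem hasDerivAt_tsum_sppsTerm_odd (hs : IsOpen s) (hs' : s.OrdConnected)
    (h0 : (0:ℝ) ∈ s) (hw : ∀ n, ContinuousOn (sppsWeight wo we n) s)
    (hwN : ∀ n, ∀ x ∈ s, ‖sppsWeight wo we n x‖ ≤ N) (hC : ∀ x ∈ s, |x| ≤ C)
    {x : ℝ} (hx : x ∈ s) :
    HasDerivAt (fun y => ∑' k, sppsTerm wo we ω (2 * k + 1) y)
      (ω * wo x * ∑' k, sppsTerm wo we ω (2 * k) x) x := by
  simpa only [sppsWeight_two_mul_add_one, tsum_mul_left] using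
    hasDerivAt_tsum_sppsTerm_comp_succ hs hs' h0 hw hwN hC (m := fun k => 2 * k)
      (fun _ _ h => by simp only at h; omega) hx

theorem hasDerivAt_tsum_sppsTerm_even (hs : IsOpen s) (hs' : s.OrdConnected)
    (h0 : (0:ℝ) ∈ s) (hw : ∀ n, ContinuousOn (sppsWeight wo we n) s)
    (hwN : ∀ n, ∀ x ∈ s, ‖sppsWeight wo we n x‖ ≤ N) (hC : ∀ x ∈ s, |x| ≤ C)
    {x : ℝ} (hx : x ∈ s) :
    HasDerivAt (fun y => ∑' k, sppsTerm wo we ω (2 * k) y)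
      (ω * we x * ∑' k, sppsTerm wo we ω (2 * k + 1) x) x := by
  have hshift : (fun y => ∑' k, sppsTerm wo we ω (2 * k) y) =ᶠ[𝓝 x]
      fun y => 1 + ∑' k, sppsTerm wo we ω (2 * k + 1 + 1) y := by
    filter_upwards [hs.mem_nhds hx] with y hy
    rw [(summable_sppsTerm_comp hs' h0 hwN hC (m := fun k => 2 * k)
      (fun _ _ h => by simp only at h; omega) hy).tsum_eq_zero_add]
    simp [sppsTerm, spps, mul_add]
  have hderiv := (hasDerivAt_tsum_sppsTerm_comp_succ hs hs' h0 hw hwN hC (ω := ω)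
    (m := fun k => 2 * k + 1) (fun _ _ h => by simp only at h; omega) hx).const_add 1
  simp only [sppsWeight_two_mul_add_two, tsum_mul_left] at hderiv
  exact hderiv.congr_of_eventuallyEq hshift

end Spps

section Darboux

variable {g S T q : ℝ → ℂ} {s : Set ℝ} {ω : ℂ}

theorem deriv_mul_sub_deriv_div_mul {x : ℝ} (hg : DifferentiableAt ℝ g x)
    (hS : DifferentiableAt ℝ S x) (hgx : g x ≠ 0) :
    deriv (fun y => g y * S y) x - deriv g x / g x * (g x * S x) = g x * deriv S x := by
  change deriv (g * S) x - _ = _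
  rw [(hg.hasDerivAt.mul hS.hasDerivAt).deriv]
  field_simp
  ring

theorem darboux_equation (hs : IsOpen s) (hg : ∀ y ∈ s, g y ≠ 0)
    (hg1 : ∀ y ∈ s, HasDerivAt g (deriv g y) y)
    (hg2 : ∀ y ∈ s, HasDerivAt (deriv g) (q y * g y) y)
    (hS : ∀ y ∈ s, HasDerivAt S (ω * (g y ^ 2)⁻¹ * T y) y)
    (hT : ∀ y ∈ s, HasDerivAt T (ω * g y ^ 2 * S y) y)
    {v : ℝ → ℂ} (hv : ∀ y ∈ s, v y = ω / g y * T y) {x : ℝ} (hx : x ∈ s) :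
    -(deriv (deriv v) x) + ((2 * (deriv g x / g x) ^ 2 - q x) + ω ^ 2) * v x = 0 := by
  have hv' : ∀ y ∈ s,
      HasDerivAt v (ω ^ 2 * g y * S y - ω * T y * deriv g y / g y ^ 2) y := by
    intro y hy
    refine ((((hT y hy).const_mul ω).div (hg1 y hy) (hg y hy)).congr_deriv ?_)
      |>.congr_of_eventuallyEq ?_
    · field_simp
    · filter_upwards [hs.mem_nhds hy] with z hz
      rw [hv z hz, Pi.div_apply]
      ring
  have hdv : deriv v =ᶠ[𝓝 x] fun y => ω ^ 2 * g y * S y - ω * T y * deriv g y / g y ^ 2 := by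
    filter_upwards [hs.mem_nhds hx] with y hy using (hv' y hy).deriv
  have hv'' := ((((hg1 x hx).const_mul (ω ^ 2)).mul (hS x hx)).sub
    ((((hT x hx).const_mul ω).mul (hg2 x hx)).div ((hg1 x hx).pow 2)
      (pow_ne_zero 2 (hg x hx)))).congr_of_eventuallyEq hdv
  simp only [Pi.mul_apply, Pi.pow_apply, Nat.add_one_sub_one, pow_one] at hv''
  have hgx := hg x hx
  rw [hv''.deriv, hv x hx]
  field_simp
  ring

end Darboux

theorem darboux_transform_u1_general (a b : ℝ) (ha : a < 0) (hb : 0 < b) (ω : ℂ)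
    (q g0 : ℝ → ℂ)
    (hg : ContDiffOn ℝ 2 g0 (Set.Ioo a b))
    (hg0 : ∀ x ∈ Set.Ioo a b, g0 x ≠ 0)
    (heq : ∀ x ∈ Set.Ioo a b, deriv (deriv g0) x = q x * g0 x)
    (hbd : ∃ M : ℝ, ∀ x ∈ Set.Ioo a b, ‖g0 x‖ ≤ M ∧ ‖(g0 x)⁻¹‖ ≤ M)
    (u1 v1 : ℝ → ℂ)
    (hu1 : u1 = fun x => g0 x * ∑' k : ℕ,
      ω ^ (2 * k) / ((2 * k)! : ℂ) *
        spps (fun t => g0 t ^ 2) (fun t => (g0 t ^ 2)⁻¹) (2 * k) x)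
    (hv1 : v1 = fun x => deriv u1 x - deriv g0 x / g0 x * u1 x) :
    (∀ x ∈ Set.Ioo a b,
      v1 x = ω / g0 x * ∑' k : ℕ,
        ω ^ (2 * k + 1) / ((2 * k + 1)! : ℂ) *
          spps (fun t => g0 t ^ 2) (fun t => (g0 t ^ 2)⁻¹) (2 * k + 1) x) ∧
    (∀ x ∈ Set.Ioo a b,
      -(deriv (deriv v1) x) +
        ((2 * (deriv g0 x / g0 x) ^ 2 - q x) + ω ^ 2) * v1 x = 0) := by
  obtain ⟨M, hM⟩ := hbd
  have hC : ∀ x ∈ Ioo a b, |x| ≤ max |a| |b| := fun x hx => abs_le_max_abs_abs hx.1.le hx.2.le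
  have hw : ∀ n, ContinuousOn (sppsWeight (fun t => g0 t ^ 2) (fun t => (g0 t ^ 2)⁻¹) n)
      (Ioo a b) := continuousOn_sppsWeight (hg.continuousOn.pow 2)
    ((hg.continuousOn.pow 2).inv₀ fun x hx => pow_ne_zero 2 (hg0 x hx))
  have hwM : ∀ n, ∀ x ∈ Ioo a b,
      ‖sppsWeight (fun t => g0 t ^ 2) (fun t => (g0 t ^ 2)⁻¹) n x‖ ≤ M ^ 2 :=
    norm_sppsWeight_le
    (fun x hx => by rw [norm_pow]; exact pow_le_pow_left₀ (norm_nonneg _) (hM x hx).1 2)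
    (fun x hx => by rw [← inv_pow, norm_pow]; exact pow_le_pow_left₀ (norm_nonneg _) (hM x hx).2 2)
  have hS := fun x (hx : x ∈ Ioo a b) => hasDerivAt_tsum_sppsTerm_even (ω := ω) isOpen_Ioo
    ordConnected_Ioo ⟨ha, hb⟩ hw hwM hC hx
  have hT := fun x (hx : x ∈ Ioo a b) => hasDerivAt_tsum_sppsTerm_odd (ω := ω) isOpen_Ioo
    ordConnected_Ioo ⟨ha, hb⟩ hw hwM hC hx
  have hg1 : ∀ y ∈ Ioo a b, HasDerivAt g0 (deriv g0 y) y := fun y hy =>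
    ((hg.differentiableOn two_ne_zero).differentiableAt (isOpen_Ioo.mem_nhds hy)).hasDerivAt
  have hg2 : ∀ y ∈ Ioo a b, HasDerivAt (deriv g0) (q y * g0 y) y := fun y hy => heq y hy ▸
    (((hg.deriv_of_isOpen isOpen_Ioo (m := 1) le_rfl).differentiableOn one_ne_zero).differentiableAt
      (isOpen_Ioo.mem_nhds hy)).hasDerivAt
  have hu : u1 = fun x => g0 x *
      ∑' k, sppsTerm (fun t => g0 t ^ 2) (fun t => (g0 t ^ 2)⁻¹) ω (2 * k) x := hu1
  have hv : ∀ x ∈ Ioo a b, v1 x = ω / g0 x *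
      ∑' k, sppsTerm (fun t => g0 t ^ 2) (fun t => (g0 t ^ 2)⁻¹) ω (2 * k + 1) x := by
    intro x hx
    rw [hv1, hu]
    dsimp only
    rw [deriv_mul_sub_deriv_div_mul (hg1 x hx).differentiableAt (hS x hx).differentiableAt
      (hg0 x hx), (hS x hx).deriv]
    field_simp
  exact ⟨hv, fun x hx => darboux_equation isOpen_Ioo hg0 hg1 hg2 hS hT hv hx⟩

/-- The Darboux transform `v₁ = u₁' - (g₀'/g₀) u₁` of the SPPS solution
`u₁ = g₀ ∑_{even n} ωⁿ/n! X̃⁽ⁿ⁾` equals `(ω/g₀) ∑_{odd n} ωⁿ/n! X̃⁽ⁿ⁾` and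
solves `-v₁'' + (r + ω²) v₁ = 0` with `r = 2(g₀'/g₀)² - q`. -/
theorem darboux_transform_u1 (a b : ℝ) (ha : a < 0) (hb : 0 < b) (ω : ℂ)
    (q g0 : ℝ → ℂ)
    (hq : ContinuousOn q (Set.Ioo a b))
    (hg : ContDiffOn ℝ 2 g0 (Set.Ioo a b))
    (hg0 : ∀ x ∈ Set.Ioo a b, g0 x ≠ 0)
    (heq : ∀ x ∈ Set.Ioo a b, deriv (deriv g0) x = q x * g0 x)
    (hbd : ∃ M : ℝ, ∀ x ∈ Set.Ioo a b, ‖g0 x‖ ≤ M ∧ ‖(g0 x)⁻¹‖ ≤ M)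
    (u1 v1 : ℝ → ℂ)
    (hu1 : u1 = fun x => g0 x * ∑' k : ℕ,
      ω ^ (2 * k) / ((2 * k)! : ℂ) *
        spps (fun t => g0 t ^ 2) (fun t => (g0 t ^ 2)⁻¹) (2 * k) x)
    (hv1 : v1 = fun x => deriv u1 x - deriv g0 x / g0 x * u1 x) :
    (∀ x ∈ Set.Ioo a b,
      v1 x = ω / g0 x * ∑' k : ℕ,
        ω ^ (2 * k + 1) / ((2 * k + 1)! : ℂ) *
          spps (fun t => g0 t ^ 2) (fun t => (g0 t ^ 2)⁻¹) (2 * k + 1) x) ∧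
    (∀ x ∈ Set.Ioo a b,
      -(deriv (deriv v1) x) +
        ((2 * (deriv g0 x / g0 x) ^ 2 - q x) + ω ^ 2) * v1 x = 0) :=
  darboux_transform_u1_general a b ha hb ω q g0 hg hg0 heq hbd u1 v1 hu1 hv1
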